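/- arXiv:2509.24125 — 2 statements merged into one kernel-verified Lean document; each statement's English description precedes it below -/
import Mathlib

section
/- For every non-identity n×n permutation matrix P, every depth k, and every choice of attention weight matrices A^{(1)}, …, A^{(k)}, there exists a target matrix Y ∈ ℝ^{n×n} such that the k-layer disentangled causal transformer on input X = [P; P·Y] (stacked vertically, with positional one-hot encodings appended) does not contain Y as any contiguous n-row block of any column-block of its final residual stream. -/
/-!
Causal masking makes row `i` of every residual stream depend only on input rows `0, …, i`.
A non-identity permutation `π` has a point `c` with `a := π c < c`. Row `a` of `Y` enters the
input only through row `n + c`, but a block storing `Y` would have to hold it in row `r + a`,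
where `r ≤ n`, so `r + a < n + c`. Varying row `a` of `Y` therefore leaves that residual row
unchanged, and `Y a a` can be chosen outside the finitely many entries of the residual stream
for `Y = 0`.
-/

open Matrix

noncomputable def permMatrix {n : ℕ} (π : Equiv.Perm (Fin n)) : Matrix (Fin n) (Fin n) ℝ :=
  Matrix.of fun i j => if π i = j then (1 : ℝ) else 0

noncomputable def maskedAttn {T m : ℕ} (A : Matrix (Fin m) (Fin m) ℝ)
    (h : Matrix (Fin T) (Fin m) ℝ) : Matrix (Fin T) (Fin m) ℝ :=
  Matrix.of fun i k =>
    (∑ j : Fin T, if j ≤ i then Real.exp ((h * A * hᵀ) i j) * h j k else 0) /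
    (∑ j : Fin T, if j ≤ i then Real.exp ((h * A * hᵀ) i j) else 0)

def dwidth (d T : ℕ) : ℕ → ℕ
  | 0 => d + T
  | ℓ + 1 => dwidth d T ℓ + dwidth d T ℓ

noncomputable def resid {d T : ℕ} (X : Matrix (Fin T) (Fin d) ℝ)
    (A : (ℓ : ℕ) → Matrix (Fin (dwidth d T ℓ)) (Fin (dwidth d T ℓ)) ℝ) :
    (ℓ : ℕ) → Matrix (Fin T) (Fin (dwidth d T ℓ)) ℝ
  | 0 => Matrix.of fun i =>
      Fin.append (X i) (fun j : Fin T => if (i : ℕ) = (j : ℕ) then (1 : ℝ) else 0)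
  | ℓ + 1 => Matrix.of fun i =>
      Fin.append (resid X A ℓ i) (maskedAttn (A ℓ) (resid X A ℓ) i)

/-- Vertical stacking `[P; Q]` of two `n`-column matrices. -/
def stack {n : ℕ} (P Q : Matrix (Fin n) (Fin n) ℝ) : Matrix (Fin (n + n)) (Fin n) ℝ :=
  Matrix.of fun i => Fin.addCases (motive := fun _ => Fin n → ℝ) (fun i₁ => P i₁) (fun i₂ => Q i₂) i

theorem Equiv.Perm.eq_one_of_forall_le_apply {α : Type*} [PartialOrder α] [Finite α]
    {σ : Equiv.Perm α} (h : ∀ x, x ≤ σ x) : σ = 1 := by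
  ext x
  have hmono : Monotone fun k : ℕ => (σ ^ k) x :=
    monotone_nat_of_le_succ fun k => by
      rw [pow_succ', Equiv.Perm.mul_apply]
      exact h _
  have hle : (σ ^ 1) x ≤ (σ ^ orderOf σ) x := hmono (orderOf_pos σ)
  rw [pow_one, pow_orderOf_eq_one, Equiv.Perm.one_apply] at hle
  exact le_antisymm hle (h x)

theorem Equiv.Perm.exists_apply_lt_of_ne_one {α : Type*} [LinearOrder α] [Finite α]
    {σ : Equiv.Perm α} (hσ : σ ≠ 1) : ∃ x, σ x < x := by
  by_contra! h
  exact hσ (eq_one_of_forall_le_apply h)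

theorem maskedAttn_apply_eq_of_forall_le {T m : ℕ} (A : Matrix (Fin m) (Fin m) ℝ)
    {h h' : Matrix (Fin T) (Fin m) ℝ} {i : Fin T} (hrows : ∀ j ≤ i, h j = h' j) :
    maskedAttn A h i = maskedAttn A h' i := by
  have hscore : ∀ j ≤ i, (h * A * hᵀ) i j = (h' * A * h'ᵀ) i j := fun j hj => by
    simp only [mul_apply, transpose_apply, hrows i le_rfl, hrows j hj]
  ext k
  simp only [maskedAttn, of_apply]
  congr 1 <;> refine Finset.sum_congr rfl fun j _ => ite_congr rfl (fun hj => ?_) fun _ => rfl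
  <;> simp only [hscore j hj, hrows j hj]

theorem resid_zero_apply {d T : ℕ} (X : Matrix (Fin T) (Fin d) ℝ)
    (A : (ℓ : ℕ) → Matrix (Fin (dwidth d T ℓ)) (Fin (dwidth d T ℓ)) ℝ) (i : Fin T) :
    resid X A 0 i = Fin.append (X i) fun j : Fin T => if (i : ℕ) = j then 1 else 0 :=
  rfl

theorem resid_succ_apply {d T : ℕ} (X : Matrix (Fin T) (Fin d) ℝ)
    (A : (ℓ : ℕ) → Matrix (Fin (dwidth d T ℓ)) (Fin (dwidth d T ℓ)) ℝ) (ℓ : ℕ) (i : Fin T) :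
    resid X A (ℓ + 1) i = Fin.append (resid X A ℓ i) (maskedAttn (A ℓ) (resid X A ℓ) i) :=
  rfl

theorem resid_apply_eq_of_forall_le {d T : ℕ} {X X' : Matrix (Fin T) (Fin d) ℝ}
    (A : (ℓ : ℕ) → Matrix (Fin (dwidth d T ℓ)) (Fin (dwidth d T ℓ)) ℝ) (ℓ : ℕ) {i : Fin T}
    (hX : ∀ j ≤ i, X j = X' j) : resid X A ℓ i = resid X' A ℓ i := by
  induction ℓ generalizing i with
  | zero => rw [resid_zero_apply, resid_zero_apply, hX i le_rfl]
  | succ ℓ ih =>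
    have hprev : ∀ j ≤ i, resid X A ℓ j = resid X' A ℓ j :=
      fun j hj => ih fun j' hj' => hX j' (hj'.trans hj)
    rw [resid_succ_apply, resid_succ_apply, hprev i le_rfl,
      maskedAttn_apply_eq_of_forall_le (A ℓ) hprev]

theorem stack_castAdd {n : ℕ} (P Q : Matrix (Fin n) (Fin n) ℝ) (i : Fin n) :
    stack P Q (Fin.castAdd n i) = P i :=
  Fin.addCases_left (motive := fun _ => Fin n → ℝ) i

theorem stack_natAdd {n : ℕ} (P Q : Matrix (Fin n) (Fin n) ℝ) (i : Fin n) :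
    stack P Q (Fin.natAdd n i) = Q i :=
  Fin.addCases_right (motive := fun _ => Fin n → ℝ) i

theorem permMatrix_mul_apply {n : ℕ} (π : Equiv.Perm (Fin n)) (Y : Matrix (Fin n) (Fin n) ℝ)
    (i : Fin n) : (permMatrix π * Y) i = Y (π i) := by
  ext j
  simp [mul_apply, permMatrix]

theorem resid_stack_perm_apply_eq {n : ℕ} (π : Equiv.Perm (Fin n))
    (A : (ℓ : ℕ) → Matrix (Fin (dwidth n (n + n) ℓ)) (Fin (dwidth n (n + n) ℓ)) ℝ) (ℓ : ℕ)
    {Y Y' : Matrix (Fin n) (Fin n) ℝ} {a : Fin n} (hY : ∀ b ≠ a, Y b = Y' b)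
    {i : Fin (n + n)} (hi : (i : ℕ) < n + (π.symm a : ℕ)) :
    resid (stack (permMatrix π) (permMatrix π * Y)) A ℓ i =
      resid (stack (permMatrix π) (permMatrix π * Y')) A ℓ i := by
  refine resid_apply_eq_of_forall_le A ℓ fun j hj => ?_
  induction j using Fin.addCases with
  | left j => rw [stack_castAdd, stack_castAdd]
  | right j =>
    have hja : π j ≠ a := by
      rintro rfl
      rw [Equiv.symm_apply_apply] at hi
      have : n + (j : ℕ) ≤ i := hj
      omega
    rw [stack_natAdd, stack_natAdd, permMatrix_mul_apply, permMatrix_mul_apply, hY _ hja]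

/-- Impossibility of inverse permutation learning: for every non-identity permutation `P`,
every depth `k` and all weight matrices, there is a target `Y` such that the disentangled
causal transformer on input `X = [P; P·Y]` does not output `Y` as any contiguous `n × n`
block of its final residual stream. -/
theorem stmt6 {n : ℕ} (π : Equiv.Perm (Fin n)) (hπ : π ≠ Equiv.refl (Fin n)) (k : ℕ)
    (A : (ℓ : ℕ) → Matrix (Fin (dwidth n (n + n) ℓ)) (Fin (dwidth n (n + n) ℓ)) ℝ) :
    ∃ Y : Matrix (Fin n) (Fin n) ℝ,
      ¬ ∃ (r c : ℕ) (hr : r + n ≤ n + n) (hc : c + n ≤ dwidth n (n + n) k),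
        ∀ a b : Fin n,
          resid (stack (permMatrix π) (permMatrix π * Y)) A k
              ⟨r + a.val, by have := a.isLt; omega⟩
              ⟨c + b.val, by have := b.isLt; omega⟩ = Y a b := by
  obtain ⟨c₀, hc₀⟩ := Equiv.Perm.exists_apply_lt_of_ne_one hπ
  set a := π c₀
  obtain ⟨t, ht⟩ := (Set.finite_range fun p : _ × _ =>
    resid (stack (permMatrix π) 0) A k p.1 p.2).exists_notMem
  refine ⟨of fun i _ => if i = a then t else 0, ?_⟩
  rintro ⟨r, c, hr, hc, hblock⟩
  have hrow : r + (a : ℕ) < n + (π.symm a : ℕ) := by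
    simp only [a, Equiv.symm_apply_apply]
    have : (a : ℕ) < c₀ := hc₀
    omega
  refine ht ⟨(⟨r + a, by omega⟩, ⟨c + a, by omega⟩), ?_⟩
  have hentry := hblock a a
  rw [resid_stack_perm_apply_eq π A k (Y' := 0) (fun b hb => by ext; simp [hb]) hrow,
    Matrix.mul_zero] at hentry
  simpa using hentry
end

section
/- With causal mask-free attention and weight matrix A^{(1)} = β·B where B has identity block I_n in block position (3,2) and zeros elsewhere (blocks indexed over [token | pos-P | pos-Y_P]), the pre-activation X A^{(1)} Xᵀ for input X = [[P, I, 0],[Y_P, 0, I]] equals β·[[0,0],[I_n,0]], and as β → ∞ the softmax activations converge to [[(1/2n)𝟙𝟙ᵀ, (1/2n)𝟙𝟙ᵀ],[I_n, 0]]; hence the bottom block-row of the layer-1 output equals P. -/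
open Matrix Filter

noncomputable def rowSoftmax {T m : ℕ} (M : Matrix (Fin T) (Fin m) ℝ) :
    Matrix (Fin T) (Fin m) ℝ :=
  Matrix.of fun i j => Real.exp (M i j) / ∑ k : Fin m, Real.exp (M i k)

/-- The embedded input `X = [[P, I, 0], [Y_P, 0, I]] ∈ ℝ^{2n × 3n}`. -/
def embIn {n : ℕ} (P YP : Matrix (Fin n) (Fin n) ℝ) :
    Matrix (Fin (n + n)) (Fin (n + (n + n))) ℝ :=
  Matrix.of fun i =>
    Fin.addCases (motive := fun _ => Fin (n + (n + n)) → ℝ)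
      (fun i₁ => Fin.append (P i₁)
        (Fin.append (fun j : Fin n => if i₁ = j then (1 : ℝ) else 0) (fun _ : Fin n => 0)))
      (fun i₂ => Fin.append (YP i₂)
        (Fin.append (fun _ : Fin n => (0 : ℝ)) (fun j : Fin n => if i₂ = j then 1 else 0))) i

/-- The block weight matrix `B` with identity block in block position (3,2)
(blocks indexed over [token | pos-P | pos-Y_P]) and zeros elsewhere. -/
def Bmat (n : ℕ) : Matrix (Fin (n + (n + n))) (Fin (n + (n + n))) ℝ :=
  Matrix.of fun i j => if 2 * n ≤ i.val ∧ i.val = j.val + n then 1 else 0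

/-- The block matrix `[[0, 0], [I_n, 0]] ∈ ℝ^{2n × 2n}`. -/
def Dmat (n : ℕ) : Matrix (Fin (n + n)) (Fin (n + n)) ℝ :=
  Matrix.of fun i j => if n ≤ i.val ∧ i.val = j.val + n then 1 else 0

/-! The score `X B Xᵀ` pairs the pos-Y_P coordinates of a query row with the pos-P coordinates
of a key row. These are one-hot position encodings, so the score is `1` exactly when the query
is the `i`-th Y_P-row and the key is the `i`-th P-row, whatever `P` and `Y` are. The top rows of
`β • Dmat n` vanish, so their softmax is uniform; each bottom row is `β` times a standard basis
vector, so its softmax tends to that vector, and multiplying by `X` copies the `i`-th P-row. -/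

lemma Fin.castAdd_ne_natAdd {m n : ℕ} (a : Fin n) (b : Fin m) :
    Fin.castAdd m a ≠ Fin.natAdd n b := by
  rw [Ne, Fin.ext_iff, Fin.val_castAdd, Fin.val_natAdd]
  omega

lemma Fin.natAdd_ne_castAdd {m n : ℕ} (a : Fin n) (b : Fin m) :
    Fin.natAdd n b ≠ Fin.castAdd m a :=
  (Fin.castAdd_ne_natAdd a b).symm

section Embedding

variable {n : ℕ} (A C : Matrix (Fin n) (Fin n) ℝ)

lemma embIn_castAdd_castAdd (i j : Fin n) :
    embIn A C (Fin.castAdd n i) (Fin.castAdd (n + n) j) = A i j := by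
  simp [embIn]

lemma embIn_natAdd_castAdd (i : Fin (n + n)) (k : Fin n) :
    embIn A C i (Fin.natAdd n (Fin.castAdd n k)) = if i = Fin.castAdd n k then 1 else 0 := by
  induction i using Fin.addCases <;>
    simp only [embIn, of_apply, Fin.addCases_left, Fin.addCases_right, Fin.append_left,
      Fin.append_right, Fin.castAdd_inj, Fin.natAdd_ne_castAdd, if_false]

lemma embIn_natAdd_natAdd (i : Fin (n + n)) (k : Fin n) :
    embIn A C i (Fin.natAdd n (Fin.natAdd n k)) = if i = Fin.natAdd n k then 1 else 0 := by
  induction i using Fin.addCases <;>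
    simp only [embIn, of_apply, Fin.addCases_left, Fin.addCases_right, Fin.append_right,
      Fin.natAdd_inj, Fin.castAdd_ne_natAdd, if_false]

end Embedding

section Score

variable {n : ℕ}

lemma Bmat_castAdd (k : Fin n) (l : Fin (n + (n + n))) :
    Bmat n (Fin.castAdd (n + n) k) l = 0 := by
  simp only [Bmat, of_apply, Fin.val_castAdd]
  grind

lemma Bmat_natAdd_castAdd (k : Fin n) (l : Fin (n + (n + n))) :
    Bmat n (Fin.natAdd n (Fin.castAdd n k)) l = 0 := by
  simp only [Bmat, of_apply, Fin.val_natAdd, Fin.val_castAdd]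
  grind

lemma Bmat_natAdd_natAdd (k : Fin n) (l : Fin (n + (n + n))) :
    Bmat n (Fin.natAdd n (Fin.natAdd n k)) l = if l = Fin.natAdd n (Fin.castAdd n k) then 1 else 0 := by
  simp only [Bmat, of_apply, Fin.val_natAdd, Fin.ext_iff, Fin.val_castAdd]
  grind

lemma mul_Bmat_mul_transpose_apply {ι κ : Type*} (M : Matrix ι (Fin (n + (n + n))) ℝ)
    (N : Matrix κ (Fin (n + (n + n))) ℝ) (i : ι) (j : κ) :
    (M * Bmat n * Nᵀ) i j =
      ∑ k : Fin n, M i (Fin.natAdd n (Fin.natAdd n k)) * N j (Fin.natAdd n (Fin.castAdd n k)) := by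
  rw [Matrix.mul_assoc, mul_apply, Fin.sum_univ_add, Fin.sum_univ_add]
  simp only [mul_apply, Bmat_castAdd, Bmat_natAdd_castAdd, Bmat_natAdd_natAdd, transpose_apply,
    zero_mul, Finset.sum_const_zero, mul_zero, zero_add, ite_mul, one_mul, Finset.sum_ite_eq',
    Finset.mem_univ, if_true]

lemma Dmat_castAdd (i : Fin n) (k : Fin (n + n)) : Dmat n (Fin.castAdd n i) k = 0 := by
  simp only [Dmat, of_apply, Fin.val_castAdd]
  grind

lemma Dmat_natAdd (i : Fin n) (k : Fin (n + n)) :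
    Dmat n (Fin.natAdd n i) k = if k = Fin.castAdd n i then 1 else 0 := by
  simp only [Dmat, of_apply, Fin.val_natAdd, Fin.ext_iff, Fin.val_castAdd]
  grind

lemma embIn_mul_Bmat_mul_transpose (A C : Matrix (Fin n) (Fin n) ℝ) :
    embIn A C * Bmat n * (embIn A C)ᵀ = Dmat n := by
  ext i j
  rw [mul_Bmat_mul_transpose_apply]
  simp only [embIn_natAdd_natAdd, embIn_natAdd_castAdd, ite_mul, one_mul, zero_mul]
  induction i using Fin.addCases with
  | left i => simp only [Fin.castAdd_ne_natAdd, if_false, Finset.sum_const_zero, Dmat_castAdd]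
  | right i => simp only [Fin.natAdd_inj, Finset.sum_ite_eq, Finset.mem_univ, if_true, Dmat_natAdd]

end Score

section Softmax

variable {T m : ℕ}

lemma rowSoftmax_apply_of_row_const (M : Matrix (Fin T) (Fin m) ℝ) (i : Fin T) (c : ℝ)
    (h : ∀ k, M i k = c) (j : Fin m) : rowSoftmax M i j = 1 / m := by
  simp only [rowSoftmax, of_apply, h, Finset.sum_const, Finset.card_univ, Fintype.card_fin,
    nsmul_eq_mul, div_mul_cancel_right₀ (Real.exp_pos c).ne', one_div]

lemma sum_exp_mul_indicator (β : ℝ) (k₀ : Fin m) :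
    ∑ k : Fin m, Real.exp (β * if k = k₀ then 1 else 0) = Real.exp β + (m - 1) := by
  rw [Fintype.sum_eq_add_sum_compl k₀, if_pos rfl, mul_one]
  have hrest : ∀ k ∈ ({k₀}ᶜ : Finset (Fin m)), Real.exp (β * if k = k₀ then 1 else 0) = 1 := by
    intro k hk
    rw [if_neg (Finset.mem_compl.mp hk ∘ Finset.mem_singleton.mpr), mul_zero, Real.exp_zero]
  rw [Finset.sum_congr rfl hrest, Finset.sum_const, nsmul_one, Finset.card_compl,
    Finset.card_singleton, Fintype.card_fin, Nat.cast_sub k₀.pos, Nat.cast_one]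

lemma tendsto_rowSoftmax_smul_of_row_eq_indicator (M : Matrix (Fin T) (Fin m) ℝ) (i : Fin T)
    (k₀ : Fin m) (h : ∀ k, M i k = if k = k₀ then 1 else 0) (j : Fin m) :
    Tendsto (fun β : ℝ => rowSoftmax (β • M) i j) atTop (nhds (if j = k₀ then 1 else 0)) := by
  have hc : (0 : ℝ) ≤ m - 1 := sub_nonneg.mpr (Nat.one_le_cast.mpr k₀.pos)
  have hden : Tendsto (fun β => Real.exp β + (m - 1)) atTop atTop :=
    tendsto_atTop_add_const_right _ _ Real.tendsto_exp_atTop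
  have hsmall : Tendsto (fun β => (m - 1) / (Real.exp β + (m - 1))) atTop (nhds 0) :=
    tendsto_const_nhds.div_atTop hden
  have hsoft : ∀ β : ℝ, rowSoftmax (β • M) i j =
      Real.exp (β * if j = k₀ then 1 else 0) / (Real.exp β + (m - 1)) := fun β => by
    simp only [rowSoftmax, of_apply, Matrix.smul_apply, smul_eq_mul, h, sum_exp_mul_indicator]
  simp only [hsoft]
  split_ifs
  · refine (by simpa using (tendsto_const_nhds (x := (1 : ℝ))).sub hsmall :
      Tendsto (fun β => 1 - (m - 1) / (Real.exp β + (m - 1))) atTop (nhds 1)).congr fun β => ?_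
    have : Real.exp β + (m - 1) ≠ 0 := by positivity
    field_simp
    ring
  · simpa only [mul_zero, Real.exp_zero] using tendsto_const_nhds.div_atTop hden

end Softmax

lemma tendsto_mul_apply_of_tendsto_row_indicator {α ι κ μ : Type*} [Fintype κ] [DecidableEq κ]
    {l : Filter α} (A : α → Matrix ι κ ℝ) (X : Matrix κ μ ℝ) (i : ι) (k₀ : κ)
    (h : ∀ k, Tendsto (fun β => A β i k) l (nhds (if k = k₀ then 1 else 0))) (j : μ) :
    Tendsto (fun β => (A β * X) i j) l (nhds (X k₀ j)) := by
  simp only [mul_apply]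
  simpa only [ite_mul, one_mul, zero_mul, Finset.sum_ite_eq', Finset.mem_univ, if_true] using
    tendsto_finsetSum Finset.univ fun k _ => (h k).mul_const (X k j)

section Attention

variable {n : ℕ}

lemma rowSoftmax_smul_Dmat_castAdd (β : ℝ) (i : Fin n) (j : Fin (n + n)) :
    rowSoftmax (β • Dmat n) (Fin.castAdd n i) j = 1 / (2 * n) := by
  rw [rowSoftmax_apply_of_row_const _ _ 0 (by simp [Dmat_castAdd]), Nat.cast_add, two_mul]

lemma tendsto_rowSoftmax_smul_Dmat_natAdd (i : Fin n) (j : Fin (n + n)) :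
    Tendsto (fun β : ℝ => rowSoftmax (β • Dmat n) (Fin.natAdd n i) j) atTop
      (nhds (if j = Fin.castAdd n i then 1 else 0)) :=
  tendsto_rowSoftmax_smul_of_row_eq_indicator _ _ _ (Dmat_natAdd i) j

lemma tendsto_rowSoftmax_smul_Dmat (i j : Fin (n + n)) :
    Tendsto (fun β : ℝ => rowSoftmax (β • Dmat n) i j) atTop
      (nhds (if n ≤ i.val then (if i.val = j.val + n then 1 else 0) else 1 / (2 * n))) := by
  induction i using Fin.addCases with
  | left i =>
    rw [if_neg (by simp)]
    simpa only [rowSoftmax_smul_Dmat_castAdd] using tendsto_const_nhds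
  | right i =>
    have hj : n + i.val = j.val + n ↔ j = Fin.castAdd n i := by
      rw [Fin.ext_iff, Fin.val_castAdd]
      omega
    simpa only [Fin.val_natAdd, Nat.le_add_right, if_true, hj] using
      tendsto_rowSoftmax_smul_Dmat_natAdd i j

end Attention

/-- With CMF attention and `A¹ = β·B` (`B` having identity block `I_n` in block position
(3,2)), the pre-activation equals `β·[[0,0],[I_n,0]]`; as `β → ∞` the softmax activations
converge to `[[(1/2n)𝟙𝟙ᵀ, (1/2n)𝟙𝟙ᵀ], [I_n, 0]]`; hence the bottom block-row of the
layer-1 output equals `P`. -/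
theorem stmt11 {n : ℕ} (π : Equiv.Perm (Fin n)) (Y : Matrix (Fin n) (Fin n) ℝ) :
    let P := permMatrix π
    let X := embIn P (P * Y)
    (∀ β : ℝ, X * (β • Bmat n) * Xᵀ = β • Dmat n) ∧
    (∀ i j : Fin (n + n),
      Tendsto (fun β : ℝ => rowSoftmax (X * (β • Bmat n) * Xᵀ) i j) atTop
        (nhds (if n ≤ i.val then (if i.val = j.val + n then 1 else 0) else 1 / (2 * n)))) ∧
    (∀ i j : Fin n,
      Tendsto
        (fun β : ℝ => (rowSoftmax (X * (β • Bmat n) * Xᵀ) * X)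
          ⟨n + i.val, by have := i.isLt; omega⟩ (Fin.castAdd (n + n) j))
        atTop (nhds (P i j))) := by
  intro P X
  have hscore : ∀ β : ℝ, X * (β • Bmat n) * Xᵀ = β • Dmat n := fun β => by
    rw [Matrix.mul_smul, Matrix.smul_mul, embIn_mul_Bmat_mul_transpose]
  refine ⟨hscore, fun i j => by simpa only [hscore] using tendsto_rowSoftmax_smul_Dmat i j,
    fun i j => ?_⟩
  simp only [hscore]
  have hcopy := tendsto_mul_apply_of_tendsto_row_indicator (fun β : ℝ => rowSoftmax (β • Dmat n))
    X (Fin.natAdd n i) (Fin.castAdd n i) (tendsto_rowSoftmax_smul_Dmat_natAdd i)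
    (Fin.castAdd (n + n) j)
  rwa [show X _ _ = P i j from embIn_castAdd_castAdd P (P * Y) i j] at hcopy
end
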